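/- arXiv:1907.12546 — 3 statements merged into one kernel-verified Lean document; each statement's English description precedes it below -/
import Mathlib

section
/- Let V be a real inner product space. For all vectors a, a₀ ∈ V one has ⟨a + a₀, a⟩·⟨a₀, a⟩ − (1/2)·⟨a + a₀, a + 2a₀⟩·⟨a, a⟩ ≤ (1/8)·‖a₀‖²·⟨a, a⟩. -/
open scoped InnerProductSpace

/-- In a real inner product space, for all vectors `a, a₀`,
`⟨a + a₀, a⟩·⟨a₀, a⟩ − (1/2)·⟨a + a₀, a + 2a₀⟩·⟨a, a⟩ ≤ (1/8)·‖a₀‖²·⟨a, a⟩`. -/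
theorem stmt0 {V : Type*} [NormedAddCommGroup V] [InnerProductSpace ℝ V] (a a₀ : V) :
    ⟪a + a₀, a⟫_ℝ * ⟪a₀, a⟫_ℝ - (1/2) * ⟪a + a₀, a + (2:ℝ) • a₀⟫_ℝ * ⟪a, a⟫_ℝ
      ≤ (1/8) * ‖a₀‖^2 * ⟪a, a⟫_ℝ := by
  have hC := real_inner_mul_inner_self_le a a₀
  have hx : (0:ℝ) ≤ ⟪a, a⟫_ℝ := real_inner_self_nonneg
  have hz : (0:ℝ) ≤ ⟪a₀, a₀⟫_ℝ := real_inner_self_nonneg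
  have hn : ‖a₀‖^2 = ⟪a₀, a₀⟫_ℝ := (real_inner_self_eq_norm_sq a₀).symm
  have hsym : ⟪a₀, a⟫_ℝ = ⟪a, a₀⟫_ℝ := real_inner_comm _ _
  simp only [inner_add_left, inner_add_right, inner_smul_right, hn, hsym]
  nlinarith [sq_nonneg (⟪a, a⟫_ℝ + ⟪a, a₀⟫_ℝ), sq_nonneg (⟪a, a₀⟫_ℝ),
    sq_nonneg (⟪a, a⟫_ℝ - ⟪a, a₀⟫_ℝ), mul_nonneg hx hz,
    sq_nonneg (2*⟪a, a⟫_ℝ + ⟪a, a₀⟫_ℝ)]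
end

section
/- Let κ > 0 and let f : ℝ → ℝ be twice differentiable on [0, ∞) with f''(t) ≥ −2κ·f'(t) for every t ≥ 0, and suppose f(t) → 0 and f'(t) → 0 as t → ∞. Then f(t) ≤ e^{−2κt}·f(0) for every t ≥ 0. -/
open Filter Set Topology

/-! Put `f' := derivWithin f (Ici 0)`. The hypothesis says that `f' + 2κ f` has nonnegative
derivative, so it is nondecreasing; since it tends to `0` at infinity, it is nonpositive.
That is exactly the statement that `t ↦ e^{2κt} f t` is nonincreasing, whence
`e^{2κt} f t ≤ f 0`. -/

theorem MonotoneOn.le_of_tendsto_atTop {α β : Type*} [TopologicalSpace α] [Preorder α]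
    [OrderClosedTopology α] [Preorder β] [IsDirectedOrder β] {f : β → α} {a b : β} {l : α}
    (hf : MonotoneOn f (Ici a)) (hl : Tendsto f atTop (𝓝 l)) (hab : a ≤ b) : f b ≤ l :=
  haveI : Nonempty β := ⟨b⟩
  ge_of_tendsto hl ((eventually_ge_atTop b).mono fun _ hbx => hf hab (hab.trans hbx) hbx)

section Convex

variable {s : Set ℝ} {f : ℝ → ℝ} (c : ℝ)

theorem monotoneOn_derivWithin_add_const_mul (hs : Convex ℝ s) (hf : DifferentiableOn ℝ f s)
    (hf' : DifferentiableOn ℝ (derivWithin f s) s)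
    (hineq : ∀ t ∈ interior s, -c * derivWithin f s t ≤ derivWithin (derivWithin f s) s t) :
    MonotoneOn (fun t => derivWithin f s t + c * f t) s := by
  refine monotoneOn_of_hasDerivWithinAt_nonneg
    (f' := fun t => derivWithin (derivWithin f s) s t + c * derivWithin f s t) hs
    (hf'.continuousOn.add (hf.continuousOn.const_smul c)) (fun t ht => ?_) (fun t ht => ?_)
  · have hts := interior_subset ht
    exact (((hf' t hts).hasDerivWithinAt).add
      (((hf t hts).hasDerivWithinAt).const_mul c)).mono interior_subset
  · linarith [hineq t ht]

theorem antitoneOn_exp_const_mul_mul (hs : Convex ℝ s) (hf : DifferentiableOn ℝ f s)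
    (hneg : ∀ t ∈ interior s, derivWithin f s t + c * f t ≤ 0) :
    AntitoneOn (fun t => Real.exp (c * t) * f t) s := by
  refine antitoneOn_of_hasDerivWithinAt_nonpos
    (f' := fun t => Real.exp (c * t) * (derivWithin f s t + c * f t)) hs
    ((by fun_prop : Continuous fun t => Real.exp (c * t)).continuousOn.mul hf.continuousOn)
    (fun t ht => ?_) (fun t ht => mul_nonpos_of_nonneg_of_nonpos (Real.exp_pos _).le (hneg t ht))
  have hexp : HasDerivAt (fun t => Real.exp (c * t)) (Real.exp (c * t) * c) t := by
    simpa using ((hasDerivAt_id t).const_mul c).exp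
  have hprod : HasDerivWithinAt (fun t => Real.exp (c * t) * f t)
      (Real.exp (c * t) * c * f t + Real.exp (c * t) * derivWithin f s t) s t :=
    hexp.hasDerivWithinAt.mul (hf t (interior_subset ht)).hasDerivWithinAt
  exact (hprod.mono interior_subset).congr_deriv (by ring)

end Convex

theorem stmt4_general (κ : ℝ) (f : ℝ → ℝ)
    (hf : DifferentiableOn ℝ f (Ici (0:ℝ)))
    (hf' : DifferentiableOn ℝ (derivWithin f (Ici (0:ℝ))) (Ici (0:ℝ)))
    (hineq : ∀ t : ℝ, 0 ≤ t →
      derivWithin (derivWithin f (Ici (0:ℝ))) (Ici (0:ℝ)) t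
        ≥ -(2*κ) * derivWithin f (Ici (0:ℝ)) t)
    (hlim : Tendsto f atTop (nhds 0))
    (hlim' : Tendsto (derivWithin f (Ici (0:ℝ))) atTop (nhds 0)) :
    ∀ t : ℝ, 0 ≤ t → f t ≤ Real.exp (-(2*κ) * t) * f 0 := by
  intro t ht
  have hmono := monotoneOn_derivWithin_add_const_mul (2 * κ) (convex_Ici 0) hf hf'
    fun s hs => hineq s (interior_subset hs)
  have hlim_sum : Tendsto (fun s => derivWithin f (Ici 0) s + 2 * κ * f s) atTop (𝓝 0) := by
    simpa using hlim'.add (hlim.const_mul (2 * κ))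
  have hanti := antitoneOn_exp_const_mul_mul (2 * κ) (convex_Ici 0) hf
    fun s hs => hmono.le_of_tendsto_atTop hlim_sum (interior_subset hs)
  have hdecay : Real.exp (2 * κ * t) * f t ≤ f 0 := by
    simpa using hanti self_mem_Ici ht ht
  calc f t = Real.exp (-(2 * κ) * t) * (Real.exp (2 * κ * t) * f t) := by
        rw [← mul_assoc, ← Real.exp_add]; ring_nf; simp
    _ ≤ Real.exp (-(2 * κ) * t) * f 0 := by gcongr

/-- If `f` is twice differentiable on `[0, ∞)` with
`f'' ≥ −2κ f'` there, and `f (t) → 0`, `f' (t) → 0` as `t → ∞`, then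
`f (t) ≤ e^{−2κt} f (0)` for all `t ≥ 0`.  Derivatives on `[0,∞)` are taken
as derivatives within `Set.Ici 0`. -/
theorem stmt4 (κ : ℝ) (hκ : 0 < κ) (f : ℝ → ℝ)
    (hf : DifferentiableOn ℝ f (Ici (0:ℝ)))
    (hf' : DifferentiableOn ℝ (derivWithin f (Ici (0:ℝ))) (Ici (0:ℝ)))
    (hineq : ∀ t : ℝ, 0 ≤ t →
      derivWithin (derivWithin f (Ici (0:ℝ))) (Ici (0:ℝ)) t
        ≥ -(2*κ) * derivWithin f (Ici (0:ℝ)) t)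
    (hlim : Tendsto f atTop (nhds 0))
    (hlim' : Tendsto (derivWithin f (Ici (0:ℝ))) atTop (nhds 0)) :
    ∀ t : ℝ, 0 ≤ t → f t ≤ Real.exp (-(2*κ) * t) * f 0 :=
  stmt4_general κ f hf hf' hineq hlim hlim'
end

section
/- Let n ≥ 1, let μ : ℝⁿ → ℝ be smooth with μ(x) > 0 for all x, and let Φ : ℝⁿ → ℝ be smooth with compact support. Then ∫_{ℝⁿ} μ(x)^{−1}(ΔΦ(x))² dx = ∫_{ℝⁿ} { Hess(μ^{−1})(x)(∇Φ(x), ∇Φ(x)) − Δ(μ^{−1})(x)·‖∇Φ(x)‖² + μ(x)^{−1}·‖Hess Φ(x)‖² } dx. -/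
open MeasureTheory Filter Set
open scoped InnerProductSpace Topology

/-- Partial derivative `∂ⱼ f x` on Euclidean space. -/
noncomputable def pder (n : ℕ) (j : Fin n) (f : EuclideanSpace ℝ (Fin n) → ℝ)
    (x : EuclideanSpace ℝ (Fin n)) : ℝ :=
  fderiv ℝ f x (EuclideanSpace.single j 1)

/-- Divergence `∇·v` of a vector field on Euclidean space. -/
noncomputable def divg (n : ℕ) (v : EuclideanSpace ℝ (Fin n) → EuclideanSpace ℝ (Fin n))
    (x : EuclideanSpace ℝ (Fin n)) : ℝ :=
  ∑ j, pder n j (fun y => v y j) x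

/-- Laplacian `Δf = ∑ⱼ ∂ⱼ∂ⱼ f`. -/
noncomputable def lapl (n : ℕ) (f : EuclideanSpace ℝ (Fin n) → ℝ)
    (x : EuclideanSpace ℝ (Fin n)) : ℝ :=
  ∑ j, pder n j (fun y => pder n j f y) x

/-- Entry `(i,j)` of the Hessian matrix of `f`. -/
noncomputable def hessij (n : ℕ) (f : EuclideanSpace ℝ (Fin n) → ℝ)
    (x : EuclideanSpace ℝ (Fin n)) (i j : Fin n) : ℝ :=
  pder n i (fun y => pder n j f y) x

/-- Hessian quadratic form `Hess f (u,u) = ∑ᵢⱼ (∂ᵢ∂ⱼf) uᵢ uⱼ`. -/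
noncomputable def hessQF (n : ℕ) (f : EuclideanSpace ℝ (Fin n) → ℝ)
    (x u : EuclideanSpace ℝ (Fin n)) : ℝ :=
  ∑ i, ∑ j, hessij n f x i j * u i * u j

/-- Squared Frobenius norm of the Hessian: `‖Hess f‖² = ∑ᵢⱼ (∂ᵢ∂ⱼf)²`. -/
noncomputable def hessFrob (n : ℕ) (f : EuclideanSpace ℝ (Fin n) → ℝ)
    (x : EuclideanSpace ℝ (Fin n)) : ℝ :=
  ∑ i, ∑ j, (hessij n f x i j)^2

/-!
Write `ρ = μ⁻¹`. The difference of the two integrands is the divergence of the compactly supported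
vector field `V = ρ (ΔΦ ∇Φ - Hess Φ ∇Φ) + ‖∇Φ‖² ∇ρ - ⟨∇ρ, ∇Φ⟩ ∇Φ`, so the two integrals agree.
Splitting `Vⱼ = ∑ᵢ Wᵢⱼ`, the divergence identity is checked on the symmetrized pairs
`∂ⱼWᵢⱼ + ∂ᵢWⱼᵢ`, where the third-order and mixed terms cancel once partial derivatives commute.
-/

open scoped ContDiff

section PartialDerivatives

variable {n : ℕ} {f g : EuclideanSpace ℝ (Fin n) → ℝ} {x : EuclideanSpace ℝ (Fin n)}

@[fun_prop]
theorem ContDiff.pder (hf : ContDiff ℝ ∞ f) (j : Fin n) : ContDiff ℝ ∞ (pder n j f) :=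
  (contDiff_infty_iff_fderiv.1 hf).2.clm_apply contDiff_const

theorem pder_add (hf : DifferentiableAt ℝ f x) (hg : DifferentiableAt ℝ g x) (j : Fin n) :
    pder n j (fun y => f y + g y) x = pder n j f x + pder n j g x := by
  simp [pder, fderiv_fun_add hf hg]

theorem pder_sub (hf : DifferentiableAt ℝ f x) (hg : DifferentiableAt ℝ g x) (j : Fin n) :
    pder n j (fun y => f y - g y) x = pder n j f x - pder n j g x := by
  simp [pder, fderiv_fun_sub hf hg]

theorem pder_mul (hf : DifferentiableAt ℝ f x) (hg : DifferentiableAt ℝ g x) (j : Fin n) :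
    pder n j (fun y => f y * g y) x = pder n j f x * g x + f x * pder n j g x := by
  simp only [pder, fderiv_fun_mul hf hg, add_apply, smul_apply, smul_eq_mul]
  ring

theorem pder_pder_comm (hf : ContDiff ℝ 2 f) (i j : Fin n) :
    pder n i (pder n j f) = pder n j (pder n i f) := by
  ext x
  have hdf : DifferentiableAt ℝ (fderiv ℝ f) x :=
    (hf.fderiv_right (m := 1) le_rfl).differentiable one_ne_zero x
  have hsymm : IsSymmSndFDerivAt ℝ f x := hf.contDiffAt.isSymmSndFDerivAt (by simp)
  have hsnd (a b : Fin n) : pder n a (pder n b f) x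
      = fderiv ℝ (fderiv ℝ f) x (EuclideanSpace.single a 1) (EuclideanSpace.single b 1) := by
    change fderiv ℝ (fun y => fderiv ℝ f y (EuclideanSpace.single b 1)) x _ = _
    simp [fderiv_clm_apply hdf (differentiableAt_const _)]
  rw [hsnd, hsnd, hsymm.eq]

theorem pder_eq_zero_of_notMem_tsupport (hx : x ∉ tsupport f) (j : Fin n) : pder n j f x = 0 := by
  rw [pder, Function.notMem_support.1 fun h => hx (support_fderiv_subset ℝ h)]
  rfl

theorem HasCompactSupport.lapl (hf : HasCompactSupport f) : HasCompactSupport (lapl n f) :=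
  HasCompactSupport.intro hf fun _ hx => Finset.sum_eq_zero fun j _ =>
    pder_eq_zero_of_notMem_tsupport (fun h => hx (tsupport_fderiv_apply_subset ℝ _ h)) j

theorem gradient_apply_eq_pder (j : Fin n) : gradient f x j = pder n j f x := by
  have : inner ℝ (gradient f x) (EuclideanSpace.single j (1 : ℝ)) = pder n j f x :=
    InnerProductSpace.toDual_symm_apply
  rwa [EuclideanSpace.inner_single_right, one_mul, conj_trivial] at this

end PartialDerivatives

theorem integral_fderiv_apply_eq_zero {E : Type*} [NormedAddCommGroup E] [NormedSpace ℝ E]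
    [FiniteDimensional ℝ E] [MeasurableSpace E] [BorelSpace E] (μ : Measure E)
    [μ.IsAddHaarMeasure] {f : E → ℝ} (hf : ContDiff ℝ 1 f) (hfc : HasCompactSupport f) (v : E) :
    ∫ x, fderiv ℝ f x v ∂μ = 0 := by
  have hf' : Integrable (fun x => fderiv ℝ f x v) μ :=
    ((hf.continuous_fderiv one_ne_zero).clm_apply continuous_const).integrable_of_hasCompactSupport
      (hfc.fderiv_apply ℝ v)
  simpa using integral_mul_fderiv_eq_neg_fderiv_mul_of_integrable (μ := μ) (f := fun _ => (1 : ℝ))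
    (g := f) (v := v) (by simp) (by simpa using hf')
    (by simpa using hf.continuous.integrable_of_hasCompactSupport hfc)
    (fun _ _ => differentiableAt_const _) (fun x _ => hf.differentiable one_ne_zero x)

theorem Finset.sum_sum_eq_of_add_swap {ι M : Type*} [AddCommMonoid M] [IsAddTorsionFree M]
    (s : Finset ι) {f g : ι → ι → M}
    (h : ∀ i ∈ s, ∀ j ∈ s, f i j + f j i = g i j + g j i) :
    ∑ i ∈ s, ∑ j ∈ s, f i j = ∑ i ∈ s, ∑ j ∈ s, g i j := by
  have hswap (F : ι → ι → M) :
      2 • ∑ i ∈ s, ∑ j ∈ s, F i j = ∑ i ∈ s, ∑ j ∈ s, (F i j + F j i) := by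
    rw [two_nsmul]
    nth_rewrite 2 [Finset.sum_comm]
    simp only [Finset.sum_add_distrib]
  apply nsmul_right_injective two_ne_zero
  simp only [hswap]
  exact Finset.sum_congr rfl fun i hi => Finset.sum_congr rfl fun j hj => h i hi j hj

section Yano

variable {n : ℕ} {ρ Φ : EuclideanSpace ℝ (Fin n) → ℝ}

/-- `∑ i, yanoFlux n ρ Φ i j` is the `j`-th component of
`ρ (ΔΦ ∇Φ - Hess Φ ∇Φ) + ‖∇Φ‖² ∇ρ - ⟨∇ρ, ∇Φ⟩ ∇Φ`. -/
noncomputable def yanoFlux (n : ℕ) (ρ Φ : EuclideanSpace ℝ (Fin n) → ℝ) (i j : Fin n) :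
    EuclideanSpace ℝ (Fin n) → ℝ := fun y =>
  ρ y * (pder n j Φ y * pder n i (pder n i Φ) y - pder n i Φ y * pder n j (pder n i Φ) y)
    + pder n i Φ y * (pder n j ρ y * pder n i Φ y - pder n j Φ y * pder n i ρ y)

noncomputable def yanoDensity (n : ℕ) (ρ Φ : EuclideanSpace ℝ (Fin n) → ℝ) (i j : Fin n)
    (x : EuclideanSpace ℝ (Fin n)) : ℝ :=
  ρ x * (pder n i (pder n i Φ) x * pder n j (pder n j Φ) x - pder n i (pder n j Φ) x ^ 2)
    - pder n i Φ x * (pder n i (pder n j ρ) x * pder n j Φ x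
      - pder n j (pder n j ρ) x * pder n i Φ x)

theorem pder_yanoFlux_add_swap (hρ : ContDiff ℝ ∞ ρ) (hΦ : ContDiff ℝ ∞ Φ) (i j : Fin n)
    (x : EuclideanSpace ℝ (Fin n)) :
    pder n j (yanoFlux n ρ Φ i j) x + pder n i (yanoFlux n ρ Φ j i) x
      = yanoDensity n ρ Φ i j x + yanoDensity n ρ Φ j i x := by
  unfold yanoFlux
  simp (disch := fun_prop (maxTransitionDepth := 2) (disch := simp)) only
    [pder_add, pder_sub, pder_mul]
  have hΦ2 : ContDiff ℝ 2 Φ := contDiff_infty.1 hΦ 2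
  have hΦ3 (a b : Fin n) :
      pder n b (pder n a (pder n a Φ)) = pder n a (pder n a (pder n b Φ)) := by
    rw [pder_pder_comm (contDiff_infty.1 (hΦ.pder a) 2), pder_pder_comm hΦ2 b a]
  unfold yanoDensity
  rw [hΦ3 i j, hΦ3 j i, pder_pder_comm hΦ2 j i, pder_pder_comm (contDiff_infty.1 hρ 2) j i]
  ring

theorem sum_yanoDensity (x : EuclideanSpace ℝ (Fin n)) :
    ∑ i, ∑ j, yanoDensity n ρ Φ i j x
      = ρ x * lapl n Φ x ^ 2 - (hessQF n ρ x (gradient Φ x)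
          - lapl n ρ x * ‖gradient Φ x‖ ^ 2 + ρ x * hessFrob n Φ x) := by
  have hL : ρ x * lapl n Φ x ^ 2
      = ∑ i, ∑ j, ρ x * (pder n i (pder n i Φ) x * pder n j (pder n j Φ) x) := by
    rw [lapl, sq, Finset.sum_mul_sum, Finset.mul_sum]
    simp only [Finset.mul_sum]
  have hQ : hessQF n ρ x (gradient Φ x)
      = ∑ i, ∑ j, pder n i (pder n j ρ) x * pder n i Φ x * pder n j Φ x := by
    simp only [hessQF, hessij, gradient_apply_eq_pder]
  have hN : lapl n ρ x * ‖gradient Φ x‖ ^ 2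
      = ∑ i, ∑ j, pder n j (pder n j ρ) x * pder n i Φ x ^ 2 := by
    rw [Finset.sum_comm]
    simp only [lapl, EuclideanSpace.norm_sq_eq, gradient_apply_eq_pder, Real.norm_eq_abs, sq_abs,
      Finset.sum_mul_sum]
  have hF : ρ x * hessFrob n Φ x = ∑ i, ∑ j, ρ x * pder n i (pder n j Φ) x ^ 2 := by
    simp only [hessFrob, hessij, Finset.mul_sum]
  rw [hL, hQ, hN, hF]
  simp only [← Finset.sum_sub_distrib, ← Finset.sum_add_distrib]
  refine Finset.sum_congr rfl fun i _ => Finset.sum_congr rfl fun j _ => ?_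
  unfold yanoDensity
  ring

theorem sum_sum_pder_yanoFlux (hρ : ContDiff ℝ ∞ ρ) (hΦ : ContDiff ℝ ∞ Φ)
    (x : EuclideanSpace ℝ (Fin n)) :
    ∑ i, ∑ j, pder n j (yanoFlux n ρ Φ i j) x
      = ρ x * lapl n Φ x ^ 2 - (hessQF n ρ x (gradient Φ x)
          - lapl n ρ x * ‖gradient Φ x‖ ^ 2 + ρ x * hessFrob n Φ x) := by
  rw [← sum_yanoDensity]
  exact Finset.sum_sum_eq_of_add_swap _ fun i _ j _ => pder_yanoFlux_add_swap hρ hΦ i j x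

theorem hasCompactSupport_yanoFlux (hΦc : HasCompactSupport Φ) (i j : Fin n) :
    HasCompactSupport (yanoFlux n ρ Φ i j) :=
  HasCompactSupport.intro hΦc fun _ hx => by
    simp [yanoFlux, pder_eq_zero_of_notMem_tsupport hx]

theorem integral_mul_lapl_sq (hρ : ContDiff ℝ ∞ ρ) (hΦ : ContDiff ℝ ∞ Φ)
    (hΦc : HasCompactSupport Φ) :
    ∫ x, ρ x * lapl n Φ x ^ 2
      = ∫ x, (hessQF n ρ x (gradient Φ x)
          - lapl n ρ x * ‖gradient Φ x‖ ^ 2 + ρ x * hessFrob n Φ x) := by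
  have hflux (i j : Fin n) : ContDiff ℝ ∞ (yanoFlux n ρ Φ i j) := by
    unfold yanoFlux
    fun_prop
  have hdiv (i j : Fin n) : Integrable (pder n j (yanoFlux n ρ Φ i j)) :=
    ((hflux i j).pder j).continuous.integrable_of_hasCompactSupport
      ((hasCompactSupport_yanoFlux hΦc i j).fderiv_apply ℝ _)
  have hdivSum : Integrable fun x => ∑ i, ∑ j, pder n j (yanoFlux n ρ Φ i j) x :=
    integrable_finsetSum _ fun i _ => integrable_finsetSum _ fun j _ => hdiv i j
  have hL : Integrable fun x => ρ x * lapl n Φ x ^ 2 :=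
    (hρ.continuous.mul ((ContDiff.sum fun j _ => (hΦ.pder j).pder j).continuous.pow 2))
      |>.integrable_of_hasCompactSupport
        (hΦc.lapl.comp_left (g := fun t => t ^ 2) (zero_pow two_ne_zero)).mul_left
  calc ∫ x, ρ x * lapl n Φ x ^ 2
      = (∫ x, ρ x * lapl n Φ x ^ 2) - ∑ i, ∑ j, ∫ x, pder n j (yanoFlux n ρ Φ i j) x := by
        simp [pder, integral_fderiv_apply_eq_zero _ (contDiff_infty.1 (hflux _ _) 1)
          (hasCompactSupport_yanoFlux hΦc _ _)]
    _ = ∫ x, (ρ x * lapl n Φ x ^ 2 - ∑ i, ∑ j, pder n j (yanoFlux n ρ Φ i j) x) := by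
        rw [integral_sub hL hdivSum, integral_finsetSum _ fun i _ => integrable_finsetSum _
          fun j _ => hdiv i j]
        simp only [integral_finsetSum _ fun j _ => hdiv _ j]
    _ = _ := by simp only [sum_sum_pder_yanoFlux hρ hΦ, sub_sub_cancel]

end Yano

theorem stmt6_general (n : ℕ)
    (μ : EuclideanSpace ℝ (Fin n) → ℝ) (hμ : ContDiff ℝ (⊤ : ℕ∞) μ)
    (hμpos : ∀ x, 0 < μ x)
    (Φ : EuclideanSpace ℝ (Fin n) → ℝ) (hΦ : ContDiff ℝ (⊤ : ℕ∞) Φ)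
    (hΦc : HasCompactSupport Φ) :
    ∫ x, (μ x)⁻¹ * (lapl n Φ x)^2
      = ∫ x, (hessQF n (fun y => (μ y)⁻¹) x (gradient Φ x)
          - lapl n (fun y => (μ y)⁻¹) x * ‖gradient Φ x‖^2
          + (μ x)⁻¹ * hessFrob n Φ x) :=
  integral_mul_lapl_sq (hμ.inv fun x => (hμpos x).ne') hΦ hΦc

/-- generalized Yano formula for `γ = 0` on flat space:
`∫ μ⁻¹(ΔΦ)² dx = ∫ { Hess(μ⁻¹)(∇Φ,∇Φ) − Δ(μ⁻¹)‖∇Φ‖² + μ⁻¹‖Hess Φ‖² } dx`. -/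
theorem stmt6 (n : ℕ) (hn : 1 ≤ n)
    (μ : EuclideanSpace ℝ (Fin n) → ℝ) (hμ : ContDiff ℝ (⊤ : ℕ∞) μ)
    (hμpos : ∀ x, 0 < μ x)
    (Φ : EuclideanSpace ℝ (Fin n) → ℝ) (hΦ : ContDiff ℝ (⊤ : ℕ∞) Φ)
    (hΦc : HasCompactSupport Φ) :
    ∫ x, (μ x)⁻¹ * (lapl n Φ x)^2
      = ∫ x, (hessQF n (fun y => (μ y)⁻¹) x (gradient Φ x)
          - lapl n (fun y => (μ y)⁻¹) x * ‖gradient Φ x‖^2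
          + (μ x)⁻¹ * hessFrob n Φ x) :=
  stmt6_general n μ hμ hμpos Φ hΦ hΦc
end
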